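/- arXiv:1811.04368 — 2 statements merged into one kernel-verified Lean document; each statement's English description precedes it below -/
import Mathlib

section
/- (Weighted Trudinger–Moser type estimate for the primitive.) Let P : ℝ → [0,∞) be continuous, bounded and tending to 0 as |x| → +∞. Let f : ℝ → [0,∞) be continuous with f(t) = 0 for t ≤ 0, f(t) = o(t) as t → 0, and α₀-critical growth at +∞; set F(t) = ∫₀^t f(s) ds. Then for every ε₀ > 0, α > α₀, q > 2 and s > 1 with r = s/(s−1), there exists C > 0 such that for every measurable u : ℝ → ℝ: ∫_ℝ P(x) F(u) dx ≤ ε₀ ∫_ℝ P(x) u² dx + C ( ∫_ℝ P(x) |u|^{qr} dx )^{1/r} ( ∫_ℝ (e^{α s u²} − 1) dx )^{1/s}. -/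
open MeasureTheory Real Filter Topology

/-- The Gagliardo seminorm squared `[u]² = ∫∫ |u(x)-u(y)|²/|x-y|² dx dy`. -/
noncomputable def gagliardo (u : ℝ → ℝ) : ℝ :=
  ∫ x : ℝ, ∫ y : ℝ, (u x - u y) ^ 2 / |x - y| ^ 2

/-- Membership in the fractional Sobolev space `H^{1/2,2}(ℝ)`:
`u ∈ L²(ℝ)` with finite Gagliardo seminorm. -/
def memH12 (u : ℝ → ℝ) : Prop :=
  MemLp u 2 (volume : Measure ℝ) ∧
    Integrable (fun p : ℝ × ℝ => (u p.1 - u p.2) ^ 2 / |p.1 - p.2| ^ 2)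
      (volume : Measure (ℝ × ℝ))

/-- The inner product of `H^{1/2,2}(ℝ)`. -/
noncomputable def innerH12 (u v : ℝ → ℝ) : ℝ :=
  (2 * Real.pi)⁻¹ * (∫ x : ℝ, ∫ y : ℝ, (u x - u y) * (v x - v y) / |x - y| ^ 2)
    + ∫ x : ℝ, u x * v x

/-- The norm of `H^{1/2,2}(ℝ)`. -/
noncomputable def normH12 (u : ℝ → ℝ) : ℝ := Real.sqrt (innerH12 u u)

/-- Weak convergence `u_n ⇀ u₀` in `H^{1/2,2}(ℝ)`. -/
def weakConvH12 (u : ℕ → ℝ → ℝ) (u₀ : ℝ → ℝ) : Prop :=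
  ∀ φ : ℝ → ℝ, memH12 φ →
    Tendsto (fun n => innerH12 (u n) φ) atTop (𝓝 (innerH12 u₀ φ))

/-- `h` has `α₀`-critical growth at `+∞`. -/
def criticalGrowth (h : ℝ → ℝ) (α₀ : ℝ) : Prop :=
  (∀ α : ℝ, α₀ < α →
    Tendsto (fun s => h s * Real.exp (-α * s ^ 2)) atTop (𝓝 0)) ∧
  (∀ α : ℝ, α < α₀ →
    Tendsto (fun s => h s * Real.exp (-α * s ^ 2)) atTop atTop)

/-- The primitive `F(t) = ∫₀ᵗ f(s) ds`. -/
noncomputable def primF (f : ℝ → ℝ) (t : ℝ) : ℝ := ∫ s in (0:ℝ)..t, f s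

/-- Hypothesis (H1). -/
def hypH1 (f : ℝ → ℝ) : Prop :=
  Continuous f ∧ (∀ t, 0 ≤ f t) ∧ f 0 = 0 ∧ ∀ t ≤ 0, f t = 0

/-- Hypothesis (H2): `f(t) = o(t)` as `t → 0`. -/
def hypH2 (f : ℝ → ℝ) : Prop :=
  Tendsto (fun t => f t / t) (𝓝[≠] (0:ℝ)) (𝓝 0)

/-- Hypothesis (H3): Ambrosetti-Rabinowitz condition. -/
def hypH3 (f g : ℝ → ℝ) : Prop :=
  ∃ θ : ℝ, 2 < θ ∧ ∀ t : ℝ, 0 < t →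
    (0 < θ * primF f t ∧ θ * primF f t ≤ t * f t) ∧
    (0 < θ * primF g t ∧ θ * primF g t ≤ t * g t)

/-- Hypothesis (H4): `t f(t) e^{-α₀ t²} → +∞` as `t → +∞`. -/
def hypH4 (f : ℝ → ℝ) (α₀ : ℝ) : Prop :=
  Tendsto (fun t => t * f t * Real.exp (-α₀ * t ^ 2)) atTop atTop

/-- Continuous, nonnegative weight vanishing at infinity. -/
def vanishAtInfty (P : ℝ → ℝ) : Prop :=
  Continuous P ∧ (∀ x, 0 ≤ P x) ∧ Tendsto P (cocompact ℝ) (𝓝 0)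

/-- The energy functional `I(u,v)`. -/
noncomputable def energyI (P Q f g : ℝ → ℝ) (u v : ℝ → ℝ) : ℝ :=
  innerH12 u v - (∫ x : ℝ, P x * primF f (u x)) - ∫ x : ℝ, Q x * primF g (v x)

/-- The derivative `I'(u,v)(φ,ψ)`. -/
noncomputable def energyI' (P Q f g u v φ ψ : ℝ → ℝ) : ℝ :=
  innerH12 u ψ + innerH12 v φ - (∫ x : ℝ, P x * f (u x) * φ x)
    - ∫ x : ℝ, Q x * g (v x) * ψ x

/-- The class `𝔠_P`. -/
def classCP (P f : ℝ → ℝ) : Prop :=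
  ∀ u : ℕ → ℝ → ℝ, (∀ n, memH12 (u n)) → weakConvH12 u (fun _ => 0) →
    (∃ C : ℝ, 0 < C ∧ ∀ n, (∫ x : ℝ, P x * f (u n x) * u n x) ≤ C) →
    Tendsto (fun n => ∫ x : ℝ, P x * primF f (u n x)) atTop (𝓝 0)

/-- The Moser function `ω̄_k`. -/
noncomputable def moser (k : ℕ) (x : ℝ) : ℝ :=
  if |x| ≤ 1 / (k : ℝ) then Real.sqrt (Real.log k) / Real.sqrt Real.pi
  else if |x| ≤ 1 then
    Real.log (1 / |x|) / (Real.sqrt Real.pi * Real.sqrt (Real.log k))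
  else 0

/-- The normalized Moser function `m_k = ω̄_k / ‖ω̄_k‖_{1/2}`. -/
noncomputable def moserN (k : ℕ) (x : ℝ) : ℝ := moser k x / normH12 (moser k)

/-- The piecewise linear plateau sequence. -/
noncomputable def plateau (α : ℝ) (n : ℕ) (x : ℝ) : ℝ :=
  if (n : ℝ) ≤ x ∧ x ≤ 2 * (n : ℝ) then (n : ℝ) ^ (-α)
  else if (n : ℝ) - 1 ≤ x ∧ x ≤ (n : ℝ) then (n : ℝ) ^ (-α) * (x - ((n : ℝ) - 1))
  else if 2 * (n : ℝ) ≤ x ∧ x ≤ 2 * (n : ℝ) + 1 then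
    (n : ℝ) ^ (-α) * ((2 * (n : ℝ) + 1) - x)
  else 0

open Set

/-!
Split `F` at a small `δ` given by `f(t) = o(t)`: below `δ` it is at most `ε₀ t²`, and above `δ`
the critical growth gives `F(t) ≲ t e^{β t²}` for any `β ∈ (α₀, α)`, which is absorbed into
`C |t|^q (e^{α t²} - 1)` because `t ≥ δ` keeps both `|t|^q` and `e^{α t²} - 1` away from zero.
Integrating against `P` and applying Hölder's inequality for the measure `P dx` to
`|u|^q · (e^{α u²} - 1)`, with `(e^{α u²} - 1)^s ≤ e^{α s u²} - 1` and `P ≤ M`, gives the estimate.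
-/

lemma rpow_exp_sub_one_le {x s : ℝ} (hx : 0 ≤ x) (hs : 1 ≤ s) :
    (exp x - 1) ^ s ≤ exp (s * x) - 1 := by
  have h := Real.add_rpow_le_rpow_add (sub_nonneg.2 (one_le_exp hx)) zero_le_one hs
  rwa [sub_add_cancel, one_rpow, ← exp_mul, mul_comm x, ← le_sub_iff_add_le] at h

lemma exp_le_inv_mul_exp_sub_one {a x : ℝ} (ha : 0 < a) (hax : a ≤ x) :
    exp x ≤ (1 - exp (-a))⁻¹ * (exp x - 1) := by
  have hlt : 0 < 1 - exp (-a) := sub_pos.2 (exp_lt_one_iff.2 (neg_lt_zero.2 ha))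
  rw [inv_mul_eq_div, le_div_iff₀ hlt]
  have : 1 ≤ exp (-a) * exp x := by
    rw [← exp_add]; exact one_le_exp (by linarith)
  nlinarith

lemma mul_exp_sq_le {β α : ℝ} (hβα : β < α) (t : ℝ) :
    t * exp (β * t ^ 2) ≤ exp (1 / (4 * (α - β))) * exp (α * t ^ 2) := by
  have hc : 0 < α - β := sub_pos.2 hβα
  have hquad : t - (α - β) * t ^ 2 ≤ 1 / (4 * (α - β)) := by
    rw [le_div_iff₀ (by linarith)]
    nlinarith [sq_nonneg (2 * (α - β) * t - 1)]
  calc t * exp (β * t ^ 2) ≤ exp t * exp (β * t ^ 2) := by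
        gcongr; linarith [add_one_le_exp t]
    _ = exp (t - (α - β) * t ^ 2 + α * t ^ 2) := by rw [← exp_add]; ring_nf
    _ ≤ exp (1 / (4 * (α - β)) + α * t ^ 2) := by gcongr
    _ = exp (1 / (4 * (α - β))) * exp (α * t ^ 2) := exp_add _ _

section Primitive

variable {f : ℝ → ℝ}

lemma primF_eq_zero_of_nonpos (hfneg : ∀ t ≤ 0, f t = 0) {t : ℝ} (ht : t ≤ 0) :
    primF f t = 0 := by
  rw [primF, intervalIntegral.integral_congr (g := fun _ => 0), intervalIntegral.integral_zero]
  intro x hx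
  rw [uIcc_of_ge ht] at hx
  exact hfneg x hx.2

lemma exists_primF_le_mul_sq (hfc : Continuous f) (hf2 : hypH2 f) {ε : ℝ} (hε : 0 < ε) :
    ∃ δ > 0, ∀ t ∈ Ico 0 δ, primF f t ≤ ε * t ^ 2 := by
  have hev : ∀ᶠ t in 𝓝[>] (0 : ℝ), f t / t < 2 * ε :=
    (hf2.mono_left (nhdsWithin_mono _ fun t ht => ne_of_gt ht)).eventually
      (gt_mem_nhds (by positivity))
  obtain ⟨δ, hδ, hsub⟩ := mem_nhdsGT_iff_exists_Ioo_subset.1 hev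
  refine ⟨δ, hδ, fun t ⟨ht0, htδ⟩ => ?_⟩
  have hle : primF f t ≤ ∫ x in (0 : ℝ)..t, 2 * ε * x := by
    refine intervalIntegral.integral_mono_on_of_le_Ioo ht0 (hfc.intervalIntegrable _ _)
      ((continuous_const_mul _).intervalIntegrable _ _) fun x ⟨hx0, hxt⟩ => ?_
    exact (div_lt_iff₀ hx0).1 (hsub ⟨hx0, hxt.trans htδ⟩) |>.le
  rw [intervalIntegral.integral_const_mul, integral_id] at hle
  linarith

lemma exists_le_mul_exp_sq (hfc : Continuous f) {β : ℝ}
    (hgrowth : Tendsto (fun t => f t * exp (-β * t ^ 2)) atTop (𝓝 0)) :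
    ∃ A > 0, ∀ t, 0 ≤ t → f t ≤ A * exp (β * t ^ 2) := by
  set g := fun t => f t * exp (-β * t ^ 2)
  obtain ⟨T, hT⟩ := eventually_atTop.1 (hgrowth.eventually (gt_mem_nhds one_pos))
  obtain ⟨M, hM⟩ := isCompact_Icc.exists_bound_of_continuousOn
    (s := Icc 0 T) (f := g) (by fun_prop)
  refine ⟨max M 1, by positivity, fun t ht => ?_⟩
  have hg : g t ≤ max M 1 := by
    rcases le_or_gt t T with htT | hTt
    · exact (le_abs_self _).trans ((hM t ⟨ht, htT⟩).trans (le_max_left _ _))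
    · exact (hT t hTt.le).le.trans (le_max_right _ _)
  calc f t = g t * exp (β * t ^ 2) := by simp only [g, mul_assoc, ← exp_add]; simp
    _ ≤ max M 1 * exp (β * t ^ 2) := by gcongr

lemma primF_le_mul_exp_sq (hfc : Continuous f) {A β : ℝ} (hA : 0 ≤ A) (hβ : 0 ≤ β)
    (hfA : ∀ t, 0 ≤ t → f t ≤ A * exp (β * t ^ 2)) {t : ℝ} (ht : 0 ≤ t) :
    primF f t ≤ A * t * exp (β * t ^ 2) := by
  have hle : primF f t ≤ ∫ _ in (0 : ℝ)..t, A * exp (β * t ^ 2) := by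
    refine intervalIntegral.integral_mono_on ht (hfc.intervalIntegrable _ _)
      intervalIntegrable_const fun x ⟨hx0, hxt⟩ => (hfA x hx0).trans ?_
    gcongr
  rw [intervalIntegral.integral_const, smul_eq_mul] at hle
  linarith

lemma exists_primF_le_sq_add_rpow_mul_exp (hfc : Continuous f) (hfneg : ∀ t ≤ 0, f t = 0)
    (hf2 : hypH2 f) {β α ε q : ℝ} (hβ : 0 ≤ β) (hβα : β < α)
    (hgrowth : Tendsto (fun t => f t * exp (-β * t ^ 2)) atTop (𝓝 0))
    (hε : 0 < ε) (hq : 0 ≤ q) :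
    ∃ C > 0, ∀ t, primF f t ≤ ε * t ^ 2 + C * (|t| ^ q * (exp (α * t ^ 2) - 1)) := by
  obtain ⟨δ, hδ, hsmall⟩ := exists_primF_le_mul_sq hfc hf2 hε
  obtain ⟨A, hA, hfA⟩ := exists_le_mul_exp_sq hfc hgrowth
  have hα : 0 < α := hβ.trans_lt hβα
  have hK : 0 < 1 - exp (-(α * δ ^ 2)) :=
    sub_pos.2 (exp_lt_one_iff.2 (neg_lt_zero.2 (by positivity)))
  set C := A * exp (1 / (4 * (α - β))) * (1 - exp (-(α * δ ^ 2)))⁻¹ / δ ^ q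
  refine ⟨C, by positivity, fun t => ?_⟩
  have hE : 0 ≤ exp (α * t ^ 2) - 1 := sub_nonneg.2 (one_le_exp (by positivity))
  have hrest : 0 ≤ C * (|t| ^ q * (exp (α * t ^ 2) - 1)) := by positivity
  rcases le_or_gt t 0 with ht0 | ht0
  · rw [primF_eq_zero_of_nonpos hfneg ht0]; positivity
  rcases lt_or_ge t δ with htδ | hδt
  · linarith [hsmall t ⟨ht0.le, htδ⟩, hrest]
  have hδq : δ ^ q ≤ |t| ^ q := by rw [abs_of_pos ht0]; gcongr
  calc primF f t ≤ A * (t * exp (β * t ^ 2)) := by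
        rw [← mul_assoc]; exact primF_le_mul_exp_sq hfc hA.le hβ hfA ht0.le
    _ ≤ A * (exp (1 / (4 * (α - β))) * exp (α * t ^ 2)) :=
        mul_le_mul_of_nonneg_left (mul_exp_sq_le hβα t) hA.le
    _ ≤ A * (exp (1 / (4 * (α - β))) * ((1 - exp (-(α * δ ^ 2)))⁻¹ * (exp (α * t ^ 2) - 1))) := by
        gcongr; exact exp_le_inv_mul_exp_sub_one (by positivity) (by gcongr)
    _ = C * (δ ^ q * (exp (α * t ^ 2) - 1)) := by
        simp only [C]; field_simp
    _ ≤ C * (|t| ^ q * (exp (α * t ^ 2) - 1)) := by gcongr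
    _ ≤ ε * t ^ 2 + C * (|t| ^ q * (exp (α * t ^ 2) - 1)) := by
        linarith [mul_nonneg hε.le (sq_nonneg t)]

end Primitive

section Weighted

open ENNReal

variable {X : Type*} [MeasurableSpace X] {μ : Measure X} {P : X → ℝ}

lemma lintegral_ofReal_le_add_of_le {a b c : X → ℝ} {ε C : ℝ} (hε : 0 ≤ ε) (hC : 0 ≤ C)
    (hb : Measurable b) (h : ∀ x, a x ≤ ε * b x + C * c x) :
    ∫⁻ x, ENNReal.ofReal (a x) ∂μ ≤
      ENNReal.ofReal ε * ∫⁻ x, ENNReal.ofReal (b x) ∂μ +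
        ENNReal.ofReal C * ∫⁻ x, ENNReal.ofReal (c x) ∂μ := by
  calc ∫⁻ x, ENNReal.ofReal (a x) ∂μ
      ≤ ∫⁻ x, ENNReal.ofReal ε * ENNReal.ofReal (b x) +
          ENNReal.ofReal C * ENNReal.ofReal (c x) ∂μ :=
        lintegral_mono fun x => (ofReal_le_ofReal (h x)).trans <| ofReal_add_le.trans_eq <| by
          rw [ofReal_mul hε, ofReal_mul hC]
    _ = _ := by
        rw [lintegral_add_left (hb.ennreal_ofReal.const_mul _),
          lintegral_const_mul' _ _ ofReal_ne_top, lintegral_const_mul' _ _ ofReal_ne_top]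

lemma lintegral_ofReal_mul_le_of_le {y : X → ℝ} {M : ℝ} (hM : ∀ x, P x ≤ M)
    (hy : ∀ x, 0 ≤ y x) :
    ∫⁻ x, ENNReal.ofReal (P x * y x) ∂μ ≤ ENNReal.ofReal M * ∫⁻ x, ENNReal.ofReal (y x) ∂μ := by
  rw [← lintegral_const_mul' _ _ ofReal_ne_top]
  exact lintegral_mono fun x =>
    (ofReal_le_ofReal (mul_le_mul_of_nonneg_right (hM x) (hy x))).trans_eq (ofReal_mul' (hy x))

lemma lintegral_ofReal_weight_mul_le_Lp_mul_Lq (hP : Measurable P) (hP0 : ∀ x, 0 ≤ P x)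
    {g h : X → ℝ} (hg : Measurable g) (hh : Measurable h) (hg0 : ∀ x, 0 ≤ g x) (hh0 : ∀ x, 0 ≤ h x)
    {r s : ℝ} (hrs : r.HolderConjugate s) :
    ∫⁻ x, ENNReal.ofReal (P x * (g x * h x)) ∂μ ≤
      (∫⁻ x, ENNReal.ofReal (P x * g x ^ r) ∂μ) ^ (1 / r) *
        (∫⁻ x, ENNReal.ofReal (P x * h x ^ s) ∂μ) ^ (1 / s) := by
  have hweight : ∀ y : X → ℝ, Measurable y → ∫⁻ x, ENNReal.ofReal (P x * y x) ∂μ =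
      ∫⁻ x, ENNReal.ofReal (y x) ∂μ.withDensity fun x => ENNReal.ofReal (P x) := fun y hy => by
    rw [lintegral_withDensity_eq_lintegral_mul _ hP.ennreal_ofReal hy.ennreal_ofReal]
    simp only [Pi.mul_apply, ofReal_mul (hP0 _)]
  rw [hweight (fun x => g x * h x) (hg.mul hh), hweight (fun x => g x ^ r) (hg.pow_const r),
    hweight (fun x => h x ^ s) (hh.pow_const s)]
  convert ENNReal.lintegral_mul_le_Lp_mul_Lq _ hrs hg.ennreal_ofReal.aemeasurable
    hh.ennreal_ofReal.aemeasurable using 4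
  · exact ofReal_mul (hg0 _)
  · funext x; exact (ofReal_rpow_of_nonneg (hg0 x) hrs.nonneg).symm
  · funext x; exact (ofReal_rpow_of_nonneg (hh0 x) hrs.symm.nonneg).symm

lemma lintegral_ofReal_weight_rpow_mul_exp_sub_one_le (hP : Measurable P) (hP0 : ∀ x, 0 ≤ P x)
    {M : ℝ} (hM : ∀ x, P x ≤ M) {u : X → ℝ} (hu : Measurable u) {α q r s : ℝ} (hα : 0 ≤ α)
    (hrs : r.HolderConjugate s) :
    ∫⁻ x, ENNReal.ofReal (P x * (|u x| ^ q * (exp (α * u x ^ 2) - 1))) ∂μ ≤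
      (∫⁻ x, ENNReal.ofReal (P x * |u x| ^ (q * r)) ∂μ) ^ (1 / r) *
        (ENNReal.ofReal M * ∫⁻ x, ENNReal.ofReal (exp (α * s * u x ^ 2) - 1) ∂μ) ^ (1 / s) := by
  have hαu : ∀ x, 0 ≤ α * u x ^ 2 := fun x => by positivity
  have hE0 : ∀ x, 0 ≤ exp (α * u x ^ 2) - 1 := fun x => sub_nonneg.2 (one_le_exp (hαu x))
  simp only [rpow_mul (abs_nonneg _)]
  refine (lintegral_ofReal_weight_mul_le_Lp_mul_Lq hP hP0 (by fun_prop) (by fun_prop)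
    (fun x => by positivity) hE0 hrs).trans ?_
  refine mul_le_mul_right (rpow_le_rpow ?_ (one_div_nonneg.2 hrs.symm.nonneg)) _
  refine (lintegral_ofReal_mul_le_of_le hM fun x => rpow_nonneg (hE0 x) _).trans ?_
  gcongr with x
  convert rpow_exp_sub_one_le (hαu x) hrs.symm.lt.le using 3
  ring

end Weighted

theorem weighted_tm_estimate_general
    (P : ℝ → ℝ) (hPc : Continuous P) (hP0 : ∀ x, 0 ≤ P x)
    (hPb : ∃ M : ℝ, ∀ x, P x ≤ M)
    (f : ℝ → ℝ) (hfc : Continuous f)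
    (hfneg : ∀ t ≤ 0, f t = 0)
    (hf2 : hypH2 f)
    (α₀ : ℝ) (hα₀ : 0 < α₀) (hcrit : criticalGrowth f α₀)
    (ε₀ α q s : ℝ) (hε₀ : 0 < ε₀) (hα : α₀ < α) (hq : 2 < q) (hs : 1 < s) :
    ∃ C : ℝ, 0 < C ∧ ∀ u : ℝ → ℝ, Measurable u →
      (∫⁻ x : ℝ, ENNReal.ofReal (P x * primF f (u x))) ≤
        ENNReal.ofReal ε₀ * (∫⁻ x : ℝ, ENNReal.ofReal (P x * u x ^ 2)) +
          ENNReal.ofReal C *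
            ((∫⁻ x : ℝ, ENNReal.ofReal (P x * |u x| ^ (q * (s / (s - 1))))) ^
                (1 / (s / (s - 1))) *
              (∫⁻ x : ℝ, ENNReal.ofReal (Real.exp (α * s * u x ^ 2) - 1)) ^
                (1 / s)) := by
  obtain ⟨M, hM⟩ := hPb
  have hM1 : ∀ x, P x ≤ max M 1 := fun x => (hM x).trans (le_max_left _ _)
  have hs0 : 0 < s := by linarith
  set r := s / (s - 1)
  have hrs : r.HolderConjugate s := (Real.HolderConjugate.conjExponent hs).symm
  obtain ⟨C₀, hC₀, hF⟩ := exists_primF_le_sq_add_rpow_mul_exp (β := (α₀ + α) / 2) (α := α)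
    hfc hfneg hf2 (by linarith) (by linarith) (hcrit.1 _ (by linarith)) hε₀ (by linarith : 0 ≤ q)
  refine ⟨C₀ * max M 1 ^ (1 / s), by positivity, fun u hu => ?_⟩
  calc ∫⁻ x, ENNReal.ofReal (P x * primF f (u x))
      ≤ ENNReal.ofReal ε₀ * (∫⁻ x, ENNReal.ofReal (P x * u x ^ 2)) + ENNReal.ofReal C₀ *
          ∫⁻ x, ENNReal.ofReal (P x * (|u x| ^ q * (exp (α * u x ^ 2) - 1))) := by
        refine lintegral_ofReal_le_add_of_le hε₀.le hC₀.le (by fun_prop) fun x => ?_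
        nlinarith [mul_le_mul_of_nonneg_left (hF (u x)) (hP0 x)]
    _ ≤ ENNReal.ofReal ε₀ * (∫⁻ x, ENNReal.ofReal (P x * u x ^ 2)) + ENNReal.ofReal C₀ *
          ((∫⁻ x, ENNReal.ofReal (P x * |u x| ^ (q * r))) ^ (1 / r) *
            (ENNReal.ofReal (max M 1) *
              ∫⁻ x, ENNReal.ofReal (exp (α * s * u x ^ 2) - 1)) ^ (1 / s)) := by
        gcongr
        exact lintegral_ofReal_weight_rpow_mul_exp_sub_one_le hPc.measurable hP0 hM1 hu
          (by linarith) hrs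
    _ = _ := by
        rw [ENNReal.mul_rpow_of_nonneg _ _ (by positivity),
          ENNReal.ofReal_rpow_of_nonneg (by positivity) (by positivity), ENNReal.ofReal_mul hC₀.le]
        ring

/-- Weighted Trudinger–Moser type estimate for the primitive. -/
theorem weighted_tm_estimate
    (P : ℝ → ℝ) (hPc : Continuous P) (hP0 : ∀ x, 0 ≤ P x)
    (hPb : ∃ M : ℝ, ∀ x, P x ≤ M)
    (hPv : Tendsto P (cocompact ℝ) (𝓝 0))
    (f : ℝ → ℝ) (hfc : Continuous f) (hfnn : ∀ t, 0 ≤ f t)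
    (hfneg : ∀ t ≤ 0, f t = 0)
    (hf2 : hypH2 f)
    (α₀ : ℝ) (hα₀ : 0 < α₀) (hcrit : criticalGrowth f α₀)
    (ε₀ α q s : ℝ) (hε₀ : 0 < ε₀) (hα : α₀ < α) (hq : 2 < q) (hs : 1 < s) :
    ∃ C : ℝ, 0 < C ∧ ∀ u : ℝ → ℝ, Measurable u →
      (∫⁻ x : ℝ, ENNReal.ofReal (P x * primF f (u x))) ≤
        ENNReal.ofReal ε₀ * (∫⁻ x : ℝ, ENNReal.ofReal (P x * u x ^ 2)) +
          ENNReal.ofReal C *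
            ((∫⁻ x : ℝ, ENNReal.ofReal (P x * |u x| ^ (q * (s / (s - 1))))) ^
                (1 / (s / (s - 1))) *
              (∫⁻ x : ℝ, ENNReal.ofReal (Real.exp (α * s * u x ^ 2) - 1)) ^
                (1 / s)) :=
  weighted_tm_estimate_general P hPc hP0 hPb f hfc hfneg hf2 α₀ hα₀ hcrit ε₀ α q s hε₀ hα hq hs
end

section
/- (The plateau sequence is bounded and converges weakly to 0.) For α ∈ [1/2, 1) define u_n : ℝ → ℝ by u_n(x) = n^{−α} for x ∈ [n, 2n], u_n(x) = n^{−α}(x − (n−1)) for x ∈ [n−1, n], u_n(x) = n^{−α}((2n+1) − x) for x ∈ [2n, 2n+1], and u_n(x) = 0 otherwise. Then each u_n ∈ H^{1/2,2}(ℝ), the sequence {u_n} is bounded in H^{1/2,2}(ℝ) (that is, sup_n ( (2π)^{-1}[u_n]² + ∥u_n∥²_{L²} ) < ∞), and u_n ⇀ 0 weakly in H^{1/2,2}(ℝ). -/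
open MeasureTheory Real Filter Topology

/-!
`plateau α n = n^{-α} · T_n`, where `T_n` is a `1`-Lipschitz trapezoid of height `1` vanishing
off an interval `S` of length `n + 2`. For `u` which is `L`-Lipschitz, bounded by `M` and zero off
`S`, the Gagliardo integrand `q(x, y)` satisfies `q ≤ L²` and `q |x - y|² ≤ 4M²`, hence
`q ≤ (L² + 4M²)/(1 + |x - y|²)`, and it vanishes unless `x ∈ S` or `y ∈ S`; integrating the
Cauchy kernel gives `[u]² ≤ 2π (L² + 4M²) |S|`. With `L = M = n^{-α}` both `[u_n]²` and
`‖u_n‖²_{L²}` are `O(n^{1-2α})`, bounded for `α ≥ 1/2`.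

Weak convergence: `u_n` vanishes on `(-∞, n - 1]`, so by Cauchy–Schwarz each part of
`⟨u_n, φ⟩_{1/2}` is at most the uniform bound times the `L²` mass of `φ` (resp. of its difference
quotient) over a region escaping to infinity, which tends to `0` by dominated convergence.
-/

open Set
open scoped NNReal ENNReal

section CauchySchwarz

variable {X : Type*} [MeasurableSpace X] {μ : Measure X}

theorem abs_integral_mul_le_sqrt_mul_sqrt {f g : X → ℝ} (hf : MemLp f 2 μ) (hg : MemLp g 2 μ) :
    |∫ x, f x * g x ∂μ| ≤ √(∫ x, f x ^ 2 ∂μ) * √(∫ x, g x ^ 2 ∂μ) := by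
  have h2 : ENNReal.ofReal 2 = 2 := by norm_num
  have hCS := integral_mul_le_Lp_mul_Lq_of_nonneg Real.HolderConjugate.two_two
    (ae_of_all _ fun x => abs_nonneg (f x)) (ae_of_all _ fun x => abs_nonneg (g x))
    (h2 ▸ hf.abs) (h2 ▸ hg.abs)
  simp only [Real.rpow_two, sq_abs, ← Real.sqrt_eq_rpow, ← abs_mul] at hCS
  exact abs_integral_le_integral_abs.trans hCS

theorem tendsto_setIntegral_of_eventually_notMem {f : X → ℝ} (hf : Integrable f μ)
    {A : ℕ → Set X} (hA : ∀ n, MeasurableSet (A n)) (hAlim : ∀ x, ∀ᶠ n in atTop, x ∉ A n) :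
    Tendsto (fun n => ∫ x in A n, f x ∂μ) atTop (𝓝 0) := by
  have h := tendsto_integral_of_dominated_convergence (fun x => ‖f x‖)
    (fun n => hf.aestronglyMeasurable.indicator (hA n)) hf.norm
    (fun n => ae_of_all _ fun x => norm_indicator_le_norm_self f x)
    (ae_of_all _ fun x => tendsto_const_nhds.congr' <|
      (hAlim x).mono fun n hn => (indicator_of_notMem hn f).symm)
  simpa only [integral_indicator (hA _), integral_zero] using h

theorem tendsto_integral_mul_of_eventually_notMem {f : ℕ → X → ℝ} {g : X → ℝ}
    {A : ℕ → Set X} {B : ℝ} (hf : ∀ n, MemLp (f n) 2 μ) (hfB : ∀ n, ∫ x, f n x ^ 2 ∂μ ≤ B)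
    (hg : MemLp g 2 μ) (hA : ∀ n, MeasurableSet (A n)) (hfA : ∀ n, ∀ x ∉ A n, f n x = 0)
    (hAlim : ∀ x, ∀ᶠ n in atTop, x ∉ A n) :
    Tendsto (fun n => ∫ x, f n x * g x ∂μ) atTop (𝓝 0) := by
  have htail : Tendsto (fun n => √B * √(∫ x in A n, g x ^ 2 ∂μ)) atTop (𝓝 0) := by
    simpa using
      ((tendsto_setIntegral_of_eventually_notMem hg.integrable_sq hA hAlim).sqrt).const_mul √B
  refine squeeze_zero_norm (fun n => ?_) htail
  have hfg : ∫ x, f n x * g x ∂μ = ∫ x, f n x * (A n).indicator g x ∂μ := by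
    congr 1 with x
    by_cases hx : x ∈ A n
    · rw [indicator_of_mem hx]
    · rw [hfA n x hx, zero_mul, zero_mul]
  have hgA : ∫ x, (A n).indicator g x ^ 2 ∂μ = ∫ x in A n, g x ^ 2 ∂μ := by
    rw [← integral_indicator (hA n)]
    congr 1 with x
    by_cases hx : x ∈ A n <;> simp [hx]
  rw [Real.norm_eq_abs, hfg]
  calc _ ≤ √(∫ x, f n x ^ 2 ∂μ) * √(∫ x, (A n).indicator g x ^ 2 ∂μ) :=
        abs_integral_mul_le_sqrt_mul_sqrt (hf n) (hg.indicator (hA n))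
    _ ≤ √B * √(∫ x in A n, g x ^ 2 ∂μ) := by rw [hgA]; gcongr; exact hfB n

end CauchySchwarz

section DifferenceQuotient

noncomputable def diffQuot (u : ℝ → ℝ) (p : ℝ × ℝ) : ℝ := (u p.1 - u p.2) / |p.1 - p.2|

theorem diffQuot_sq (u : ℝ → ℝ) (p : ℝ × ℝ) :
    diffQuot u p ^ 2 = (u p.1 - u p.2) ^ 2 / |p.1 - p.2| ^ 2 :=
  div_pow _ _ _

theorem diffQuot_mul_diffQuot (u v : ℝ → ℝ) (p : ℝ × ℝ) :
    diffQuot u p * diffQuot v p = (u p.1 - u p.2) * (v p.1 - v p.2) / |p.1 - p.2| ^ 2 := by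
  rw [diffQuot, diffQuot, div_mul_div_comm, sq]

theorem MeasureTheory.AEStronglyMeasurable.diffQuot {u : ℝ → ℝ}
    (hu : AEStronglyMeasurable u volume) : AEStronglyMeasurable (diffQuot u) volume := by
  rw [Measure.volume_eq_prod]
  exact (hu.comp_fst.sub hu.comp_snd).div₀
    (measurable_fst.sub measurable_snd).abs.aestronglyMeasurable

theorem memH12_of_memLp_diffQuot {u : ℝ → ℝ} (hu : MemLp u 2 volume)
    (hq : MemLp (diffQuot u) 2 volume) : memH12 u :=
  ⟨hu, by simpa only [diffQuot_sq] using hq.integrable_sq⟩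

theorem memH12.memLp_diffQuot {u : ℝ → ℝ} (hu : memH12 u) : MemLp (diffQuot u) 2 volume :=
  (memLp_two_iff_integrable_sq hu.1.1.diffQuot).2 (by simpa only [diffQuot_sq] using hu.2)

theorem integral_prod_volume_eq {f : ℝ × ℝ → ℝ} (hf : Integrable f volume) :
    ∫ p, f p = ∫ x, ∫ y, f (x, y) := by
  rw [Measure.volume_eq_prod] at hf ⊢
  exact integral_prod f hf

theorem gagliardo_eq_integral_diffQuot_sq {u : ℝ → ℝ}
    (hq : Integrable (fun p => diffQuot u p ^ 2) volume) :
    gagliardo u = ∫ p, diffQuot u p ^ 2 := by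
  simp only [diffQuot_sq] at hq ⊢
  exact (integral_prod_volume_eq hq).symm

theorem innerH12_eq_integral_diffQuot_mul {u v : ℝ → ℝ} (hu : memH12 u) (hv : memH12 v) :
    innerH12 u v = (2 * π)⁻¹ * (∫ p, diffQuot u p * diffQuot v p) + ∫ x, u x * v x := by
  have hint : Integrable (fun p => diffQuot u p * diffQuot v p) volume :=
    hu.memLp_diffQuot.integrable_mul hv.memLp_diffQuot
  simp only [diffQuot_mul_diffQuot] at hint ⊢
  rw [innerH12, integral_prod_volume_eq hint]

end DifferenceQuotient

section Shear

variable {G : Type*} [MeasurableSpace G] [AddGroup G] [MeasurableAdd₂ G] [MeasurableNeg G]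
  {μ : Measure G} [SFinite μ] [μ.IsAddRightInvariant]

theorem integrable_mul_comp_sub_fst {F H : G → ℝ} (hF : Integrable F μ) (hH : Integrable H μ) :
    Integrable (fun p : G × G => F p.1 * H (p.2 - p.1)) (μ.prod μ) :=
  ((measurePreserving_prod_sub μ μ).integrable_comp
    (hF.mul_prod hH).aestronglyMeasurable).2 (hF.mul_prod hH)

theorem integral_mul_comp_sub_fst (F H : G → ℝ) :
    ∫ p : G × G, F p.1 * H (p.2 - p.1) ∂(μ.prod μ) = (∫ x, F x ∂μ) * ∫ x, H x ∂μ := by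
  rw [← integral_prod_mul F H]
  exact (measurePreserving_prod_sub μ μ).integral_comp
    (MeasurableEquiv.shearSubRight G).measurableEmbedding (fun q : G × G => F q.1 * H q.2)

end Shear

section IndicatorCauchy

noncomputable def indicatorCauchy (S : Set ℝ) (p : ℝ × ℝ) : ℝ :=
  S.indicator 1 p.1 * (1 + (p.2 - p.1) ^ 2)⁻¹

variable {S : Set ℝ}

theorem integrable_indicator_one_of_measure_ne_top (hS : MeasurableSet S) (hS' : volume S ≠ ∞) :
    Integrable (S.indicator (1 : ℝ → ℝ)) volume :=
  (integrable_indicator_iff hS).2 (integrableOn_const hS')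

theorem integrable_indicatorCauchy (hS : MeasurableSet S) (hS' : volume S ≠ ∞) :
    Integrable (indicatorCauchy S) (volume.prod volume) :=
  integrable_mul_comp_sub_fst (integrable_indicator_one_of_measure_ne_top hS hS')
    integrable_inv_one_add_sq

theorem integral_indicatorCauchy (hS : MeasurableSet S) :
    ∫ p, indicatorCauchy S p ∂(volume.prod volume) = π * volume.real S := by
  unfold indicatorCauchy
  rw [integral_mul_comp_sub_fst (S.indicator 1) (fun t => (1 + t ^ 2)⁻¹),
    integral_indicator_one hS, integral_univ_inv_one_add_sq, mul_comm]

theorem integrable_indicatorCauchy_add_swap (hS : MeasurableSet S) (hS' : volume S ≠ ∞) :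
    Integrable (fun p => indicatorCauchy S p + indicatorCauchy S p.swap) volume := by
  rw [Measure.volume_eq_prod]
  exact (integrable_indicatorCauchy hS hS').add (integrable_indicatorCauchy hS hS').swap

theorem integral_indicatorCauchy_add_swap (hS : MeasurableSet S) (hS' : volume S ≠ ∞) :
    ∫ p, indicatorCauchy S p + indicatorCauchy S p.swap = 2 * π * volume.real S := by
  have h := integrable_indicatorCauchy hS hS'
  have h_swap : Integrable (fun p => indicatorCauchy S p.swap) (volume.prod volume) := h.swap
  rw [Measure.volume_eq_prod, integral_add h h_swap, integral_prod_swap (indicatorCauchy S),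
    integral_indicatorCauchy hS]
  ring

end IndicatorCauchy

section LipschitzBump

variable {u : ℝ → ℝ} {L : ℝ≥0} {M : ℝ} {S : Set ℝ}

theorem diffQuot_sq_le_indicatorCauchy (hu : LipschitzWith L u) (hM : ∀ x, |u x| ≤ M)
    (hSu : ∀ x ∉ S, u x = 0) (p : ℝ × ℝ) :
    diffQuot u p ^ 2 ≤ (L ^ 2 + 4 * M ^ 2) * (indicatorCauchy S p + indicatorCauchy S p.swap) := by
  obtain ⟨x, y⟩ := p
  have hind : ∀ z, 0 ≤ S.indicator (1 : ℝ → ℝ) z := indicator_nonneg fun _ _ => zero_le_one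
  have hmaj : indicatorCauchy S (x, y) + indicatorCauchy S (x, y).swap =
      (S.indicator 1 x + S.indicator 1 y) * (1 + |x - y| ^ 2)⁻¹ := by
    simp only [indicatorCauchy, Prod.swap, sq_abs, ← neg_sub x y, neg_sq]
    ring
  rw [hmaj]
  by_cases hzero : diffQuot u (x, y) = 0
  · rw [hzero, sq, zero_mul]
    exact mul_nonneg (by positivity) (mul_nonneg (add_nonneg (hind x) (hind y)) (by positivity))
  have hxy : 0 < |x - y| := abs_pos.2 (sub_ne_zero.2 fun h => hzero (by simp [diffQuot, h]))
  have hS1 : 1 ≤ S.indicator (1 : ℝ → ℝ) x + S.indicator 1 y := by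
    by_cases hx : x ∈ S
    · simp [indicator_of_mem hx, hind y]
    by_cases hy : y ∈ S
    · simp [indicator_of_mem hy, hind x]
    exact absurd (by simp [diffQuot, hSu x hx, hSu y hy]) hzero
  have hlip : |u x - u y| ≤ L * |x - y| := by simpa [Real.dist_eq] using hu.dist_le_mul x y
  have hsup : |u x - u y| ≤ 2 * M := (abs_sub _ _).trans (by linarith [hM x, hM y])
  have hq : diffQuot u (x, y) ^ 2 * |x - y| ^ 2 = (u x - u y) ^ 2 := by
    rw [diffQuot_sq]; field_simp
  have hqL : diffQuot u (x, y) ^ 2 ≤ L ^ 2 := by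
    refine le_of_mul_le_mul_right ?_ (pow_pos hxy 2)
    rw [hq, ← mul_pow, ← sq_abs]
    exact pow_le_pow_left₀ (abs_nonneg _) hlip 2
  have hqM : diffQuot u (x, y) ^ 2 * |x - y| ^ 2 ≤ 4 * M ^ 2 := by
    rw [hq, ← sq_abs]; nlinarith [abs_nonneg (u x - u y)]
  calc diffQuot u (x, y) ^ 2 ≤ (L ^ 2 + 4 * M ^ 2) * (1 + |x - y| ^ 2)⁻¹ := by
        rw [← div_eq_mul_inv, le_div_iff₀ (by positivity)]; nlinarith
    _ ≤ _ := by gcongr; exact le_mul_of_one_le_left (by positivity) hS1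

theorem integrable_diffQuot_sq_of_lipschitzWith (hu : LipschitzWith L u) (hM : ∀ x, |u x| ≤ M)
    (hS : MeasurableSet S) (hS' : volume S ≠ ∞) (hSu : ∀ x ∉ S, u x = 0) :
    Integrable (fun p => diffQuot u p ^ 2) volume :=
  ((integrable_indicatorCauchy_add_swap hS hS').const_mul _).mono'
    (hu.continuous.aestronglyMeasurable.diffQuot.pow 2)
    (ae_of_all _ fun p => by
      rw [Real.norm_of_nonneg (sq_nonneg _)]
      exact diffQuot_sq_le_indicatorCauchy hu hM hSu p)

theorem integral_diffQuot_sq_le_of_lipschitzWith (hu : LipschitzWith L u) (hM : ∀ x, |u x| ≤ M)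
    (hS : MeasurableSet S) (hS' : volume S ≠ ∞) (hSu : ∀ x ∉ S, u x = 0) :
    ∫ p, diffQuot u p ^ 2 ≤ (L ^ 2 + 4 * M ^ 2) * (2 * π * volume.real S) := by
  rw [← integral_indicatorCauchy_add_swap hS hS', ← integral_const_mul]
  exact integral_mono (integrable_diffQuot_sq_of_lipschitzWith hu hM hS hS' hSu)
    ((integrable_indicatorCauchy_add_swap hS hS').const_mul _)
    (diffQuot_sq_le_indicatorCauchy hu hM hSu)

theorem sq_le_mul_indicator (hM : ∀ x, |u x| ≤ M) (hSu : ∀ x ∉ S, u x = 0) (x : ℝ) :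
    u x ^ 2 ≤ M ^ 2 * S.indicator 1 x := by
  by_cases hx : x ∈ S
  · rw [indicator_of_mem hx, Pi.one_apply, mul_one, ← sq_abs]
    exact pow_le_pow_left₀ (abs_nonneg _) (hM x) 2
  · rw [hSu x hx, indicator_of_notMem hx]; simp

theorem integrable_sq_of_bounded (hu : AEStronglyMeasurable u volume) (hM : ∀ x, |u x| ≤ M)
    (hS : MeasurableSet S) (hS' : volume S ≠ ∞) (hSu : ∀ x ∉ S, u x = 0) :
    Integrable (fun x => u x ^ 2) volume :=
  ((integrable_indicator_one_of_measure_ne_top hS hS').const_mul _).mono' (hu.pow 2)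
    (ae_of_all _ fun x => by
      rw [Real.norm_of_nonneg (sq_nonneg _)]
      exact sq_le_mul_indicator hM hSu x)

theorem integral_sq_le_of_bounded (hu : AEStronglyMeasurable u volume) (hM : ∀ x, |u x| ≤ M)
    (hS : MeasurableSet S) (hS' : volume S ≠ ∞) (hSu : ∀ x ∉ S, u x = 0) :
    ∫ x, u x ^ 2 ≤ M ^ 2 * volume.real S := by
  rw [← integral_indicator_one hS, ← integral_const_mul]
  exact integral_mono (integrable_sq_of_bounded hu hM hS hS' hSu)
    ((integrable_indicator_one_of_measure_ne_top hS hS').const_mul _)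
    (sq_le_mul_indicator hM hSu)

theorem memH12_of_lipschitzWith (hu : LipschitzWith L u) (hM : ∀ x, |u x| ≤ M)
    (hS : MeasurableSet S) (hS' : volume S ≠ ∞) (hSu : ∀ x ∉ S, u x = 0) : memH12 u :=
  memH12_of_memLp_diffQuot
    ((memLp_two_iff_integrable_sq hu.continuous.aestronglyMeasurable).2
      (integrable_sq_of_bounded hu.continuous.aestronglyMeasurable hM hS hS' hSu))
    ((memLp_two_iff_integrable_sq hu.continuous.aestronglyMeasurable.diffQuot).2
      (integrable_diffQuot_sq_of_lipschitzWith hu hM hS hS' hSu))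

end LipschitzBump

section Plateau

noncomputable def tent (a b x : ℝ) : ℝ := min 1 (max 0 (min (x - a) (b - x)))

theorem lipschitzWith_tent (a b : ℝ) : LipschitzWith 1 (tent a b) := by
  have h₁ : LipschitzWith 1 (fun x : ℝ => x - a) :=
    LipschitzWith.of_dist_le_mul fun x y => by simp [Real.dist_eq]
  have h₂ : LipschitzWith 1 (fun x : ℝ => b - x) :=
    LipschitzWith.of_dist_le_mul fun x y => by
      rw [Real.dist_eq, Real.dist_eq, sub_sub_sub_cancel_left, abs_sub_comm, NNReal.coe_one,
        one_mul]
  have h := ((h₁.min h₂).const_max 0).const_min 1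
  rwa [max_self] at h

theorem abs_tent_le_one (a b x : ℝ) : |tent a b x| ≤ 1 := by
  rw [abs_of_nonneg (le_min zero_le_one (le_max_left _ _))]
  exact min_le_left _ _

theorem tent_eq_zero {a b x : ℝ} (hx : x ∉ Ioo a b) : tent a b x = 0 := by
  have : min (x - a) (b - x) ≤ 0 := by
    rw [mem_Ioo, not_and_or, not_lt, not_lt] at hx
    rcases hx with hx | hx
    · exact (min_le_left _ _).trans (by linarith)
    · exact (min_le_right _ _).trans (by linarith)
  rw [tent, max_eq_left this, min_eq_right zero_le_one]

theorem plateau_eq_mul_tent (α : ℝ) (n : ℕ) :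
    plateau α n = fun x => (n : ℝ) ^ (-α) * tent ((n : ℝ) - 1) (2 * n + 1) x := by
  ext x
  have hn : (0 : ℝ) ≤ n := Nat.cast_nonneg n
  simp only [plateau, tent, min_def, max_def]
  split_ifs <;> first | ring1 | (exfalso; grind)

variable (α : ℝ) (n : ℕ)

theorem lipschitzWith_plateau : LipschitzWith ‖(n : ℝ) ^ (-α)‖₊ (plateau α n) := by
  rw [plateau_eq_mul_tent]
  simpa [Function.comp_def] using
    (lipschitzWith_smul ((n : ℝ) ^ (-α))).comp (lipschitzWith_tent _ _)

theorem abs_plateau_le (x : ℝ) : |plateau α n x| ≤ (n : ℝ) ^ (-α) := by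
  have hc : (0 : ℝ) ≤ (n : ℝ) ^ (-α) := by positivity
  rw [plateau_eq_mul_tent, abs_mul, abs_of_nonneg hc]
  exact mul_le_of_le_one_right hc (abs_tent_le_one _ _ _)

theorem plateau_eq_zero {x : ℝ} (hx : x ∉ Ioo ((n : ℝ) - 1) (2 * n + 1)) : plateau α n x = 0 := by
  simp only [plateau_eq_mul_tent, tent_eq_zero hx, mul_zero]

theorem plateau_eq_zero_of_le {x : ℝ} (hx : x ≤ (n : ℝ) - 1) : plateau α n x = 0 :=
  plateau_eq_zero α n fun h => hx.not_gt h.1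

theorem memH12_plateau : memH12 (plateau α n) :=
  memH12_of_lipschitzWith (lipschitzWith_plateau α n) (abs_plateau_le α n) measurableSet_Ioo
    measure_Ioo_lt_top.ne (fun _ => plateau_eq_zero α n)

variable {α}

-- At `n = 0` this holds because of the junk value `0 ^ (-α) = 0`.
theorem rpow_neg_sq_mul_add_two_le (hα : 1 / 2 ≤ α) : ((n : ℝ) ^ (-α)) ^ 2 * (n + 2) ≤ 3 := by
  rcases Nat.eq_zero_or_pos n with rfl | hn
  · rw [Nat.cast_zero, Real.zero_rpow (by linarith)]
    norm_num
  have hn1 : (1 : ℝ) ≤ n := by exact_mod_cast hn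
  have hsq : ((n : ℝ) ^ (-α)) ^ 2 ≤ (n : ℝ)⁻¹ := by
    rw [← Real.rpow_natCast, ← Real.rpow_mul (Nat.cast_nonneg n), ← Real.rpow_neg_one]
    exact Real.rpow_le_rpow_of_exponent_le hn1 (by push_cast; linarith)
  calc ((n : ℝ) ^ (-α)) ^ 2 * (n + 2) ≤ (n : ℝ)⁻¹ * (n + 2) := by gcongr
    _ ≤ 3 := by rw [inv_mul_le_iff₀ (by positivity)]; linarith

theorem volume_real_plateau_support : volume.real (Ioo ((n : ℝ) - 1) (2 * n + 1)) = n + 2 := by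
  rw [Real.volume_real_Ioo_of_le (by linarith [(Nat.cast_nonneg n : (0 : ℝ) ≤ n)])]
  ring

theorem integral_plateau_sq_le (hα : 1 / 2 ≤ α) : ∫ x, plateau α n x ^ 2 ≤ 3 := by
  refine (integral_sq_le_of_bounded (lipschitzWith_plateau α n).continuous.aestronglyMeasurable
    (abs_plateau_le α n) measurableSet_Ioo measure_Ioo_lt_top.ne
    (fun _ => plateau_eq_zero α n)).trans ?_
  rw [volume_real_plateau_support]
  exact rpow_neg_sq_mul_add_two_le n hα

theorem integral_diffQuot_plateau_sq_le (hα : 1 / 2 ≤ α) :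
    ∫ p, diffQuot (plateau α n) p ^ 2 ≤ 30 * π := by
  refine (integral_diffQuot_sq_le_of_lipschitzWith (lipschitzWith_plateau α n)
    (abs_plateau_le α n) measurableSet_Ioo measure_Ioo_lt_top.ne
    (fun _ => plateau_eq_zero α n)).trans ?_
  have hc : (0 : ℝ) ≤ (n : ℝ) ^ (-α) := by positivity
  rw [coe_nnnorm, Real.norm_of_nonneg hc, volume_real_plateau_support]
  nlinarith [rpow_neg_sq_mul_add_two_le n hα, Real.pi_pos]

theorem eventually_notMem_Ioi_natCast_sub_one (x : ℝ) :
    ∀ᶠ n : ℕ in atTop, x ∉ Ioi ((n : ℝ) - 1) :=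
  (tendsto_natCast_atTop_atTop.eventually_ge_atTop (x + 1)).mono fun n hn h => by
    rw [mem_Ioi] at h; linarith

theorem tendsto_integral_plateau_mul (hα : 1 / 2 ≤ α) {φ : ℝ → ℝ} (hφ : MemLp φ 2 volume) :
    Tendsto (fun n => ∫ x, plateau α n x * φ x) atTop (𝓝 0) :=
  tendsto_integral_mul_of_eventually_notMem (fun n => (memH12_plateau α n).1)
    (fun n => integral_plateau_sq_le n hα) hφ (fun _ => measurableSet_Ioi)
    (fun n _ hx => plateau_eq_zero_of_le α n (not_lt.1 hx))
    eventually_notMem_Ioi_natCast_sub_one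

theorem tendsto_integral_diffQuot_plateau_mul (hα : 1 / 2 ≤ α) {φ : ℝ → ℝ} (hφ : memH12 φ) :
    Tendsto (fun n => ∫ p, diffQuot (plateau α n) p * diffQuot φ p) atTop (𝓝 0) := by
  refine tendsto_integral_mul_of_eventually_notMem (fun n => (memH12_plateau α n).memLp_diffQuot)
    (fun n => integral_diffQuot_plateau_sq_le n hα) hφ.memLp_diffQuot
    (A := fun n => Prod.fst ⁻¹' Ioi ((n : ℝ) - 1) ∪ Prod.snd ⁻¹' Ioi ((n : ℝ) - 1))
    (fun _ => (measurable_fst measurableSet_Ioi).union (measurable_snd measurableSet_Ioi))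
    (fun n p hp => ?_) (fun p => ?_)
  · simp only [mem_union, mem_preimage, mem_Ioi, not_or, not_lt] at hp
    simp [diffQuot, plateau_eq_zero_of_le α n hp.1, plateau_eq_zero_of_le α n hp.2]
  · filter_upwards [eventually_notMem_Ioi_natCast_sub_one p.1,
      eventually_notMem_Ioi_natCast_sub_one p.2] with n h₁ h₂
    exact not_or.2 ⟨h₁, h₂⟩

end Plateau

theorem plateau_bounded_weak_null_general (α : ℝ) (hα : 1 / 2 ≤ α) :
    (∀ n : ℕ, memH12 (plateau α n)) ∧
    (∃ C : ℝ, ∀ n : ℕ,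
      (2 * Real.pi)⁻¹ * gagliardo (plateau α n) +
        (∫ x : ℝ, plateau α n x ^ 2) ≤ C) ∧
    weakConvH12 (plateau α) (fun _ => 0) := by
  refine ⟨memH12_plateau α, ⟨18, fun n => ?_⟩, fun φ hφ => ?_⟩
  · rw [gagliardo_eq_integral_diffQuot_sq (memH12_plateau α n).memLp_diffQuot.integrable_sq]
    have hgag := integral_diffQuot_plateau_sq_le n hα
    have hL2 := integral_plateau_sq_le n hα
    calc (2 * π)⁻¹ * (∫ p, diffQuot (plateau α n) p ^ 2) + ∫ x, plateau α n x ^ 2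
        ≤ (2 * π)⁻¹ * (30 * π) + 3 := by gcongr
      _ = 18 := by field_simp; norm_num
  · have hzero : innerH12 (fun _ => 0) φ = 0 := by simp [innerH12]
    simp only [hzero, innerH12_eq_integral_diffQuot_mul (memH12_plateau α _) hφ]
    simpa using ((tendsto_integral_diffQuot_plateau_mul hα hφ).const_mul (2 * π)⁻¹).add
      (tendsto_integral_plateau_mul hα hφ.1)

/-- The plateau sequence is in `H^{1/2,2}(ℝ)`, bounded there,
and converges weakly to `0`. -/
theorem plateau_bounded_weak_null (α : ℝ) (hα : 1 / 2 ≤ α) (hα1 : α < 1) :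
    (∀ n : ℕ, memH12 (plateau α n)) ∧
    (∃ C : ℝ, ∀ n : ℕ,
      (2 * Real.pi)⁻¹ * gagliardo (plateau α n) +
        (∫ x : ℝ, plateau α n x ^ 2) ≤ C) ∧
    weakConvH12 (plateau α) (fun _ => 0) :=
  plateau_bounded_weak_null_general α hα
end
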